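/- arXiv:2504.07391 — 2 statements merged into one kernel-verified Lean document; each statement's English description precedes it below -/
import Mathlib

section
/- Let T > 0, let 0 < α < β ≤ 1, and let u ∈ C^{0,β}([0,T]). Fix N ∈ ℕ, τ = T/N, t_j = jτ, and let n be an integer with 2 ≤ n ≤ N. Then the last-subinterval part of the L2 truncation error integral satisfies ∫_{t_{n−1}}^{t_n} |Π_{2,n−1}u(s) − u(s)| / (t_n − s)^{1+α} ds ≤ ( (2^{β−1} + 2)/(1 − α) + 1/(β − α) ) · [u]_{C^{0,β}[0,T]} · τ^{β−α}. -/
open Set MeasureTheory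

/-- `M` is a Hölder bound (with exponent `β`) for `u` on `[0, T]`, i.e.
`[u]_{C^{0,β}[0,T]} ≤ M`; used with the least such `M`, it encodes the Hölder seminorm. -/
def holderBnd (T β M : ℝ) (u : ℝ → ℝ) : Prop :=
  ∀ x ∈ Set.Icc (0:ℝ) T, ∀ y ∈ Set.Icc (0:ℝ) T, |u x - u y| ≤ M * |x - y| ^ β

/-- The quadratic Lagrange interpolant `Π_{2,j} u` of `u` at the nodes
`t_{j-1} = (j-1)τ`, `t_j = jτ`, `t_{j+1} = (j+1)τ`. -/
noncomputable def Pi2 (τ : ℝ) (u : ℝ → ℝ) (j : ℕ) (s : ℝ) : ℝ :=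
  (s - (j:ℝ)*τ) * (s - ((j:ℝ)+1)*τ) / (2*τ^2) * u (((j:ℝ)-1)*τ)
  - (s - ((j:ℝ)-1)*τ) * (s - ((j:ℝ)+1)*τ) / τ^2 * u ((j:ℝ)*τ)
  + (s - ((j:ℝ)-1)*τ) * (s - (j:ℝ)*τ) / (2*τ^2) * u (((j:ℝ)+1)*τ)

/-!
The Lagrange weights sum to one, so `Π₂u(s) - u(s)` is the weighted sum of the differences
`u(t_k) - u(s)` over the three nodes. For `s` in the last subinterval at distance `d = t_n - s`
from `t_n`, the weights of `t_{n-2}` and `t_{n-1}` are `O(d/τ)` and those differences are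
`O(M τ^β)`, while the weight of `t_n` is at most one and `|u(t_n) - u(s)| ≤ M d^β`. After
division by `d^{1+α}` only the integrable singularities `d^{-α}` and `d^{β-α-1}` remain.
-/

namespace holderBnd

variable {T β M : ℝ} {u : ℝ → ℝ}

theorem nonneg (hM : holderBnd T β M u) (hT : 0 < T) : 0 ≤ M := by
  have h := hM 0 ⟨le_rfl, hT.le⟩ T ⟨hT.le, le_rfl⟩
  exact nonneg_of_mul_nonneg_left ((abs_nonneg _).trans h)
    (Real.rpow_pos_of_pos (by simpa using hT.ne') _)

theorem le_of_abs_sub_le (hM : holderBnd T β M u) (hM0 : 0 ≤ M) (hβ : 0 ≤ β) {x y r : ℝ}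
    (hx : x ∈ Icc 0 T) (hy : y ∈ Icc 0 T) (hxy : |x - y| ≤ r) : |u x - u y| ≤ M * r ^ β :=
  (hM x hx y hy).trans <|
    mul_le_mul_of_nonneg_left (Real.rpow_le_rpow (abs_nonneg _) hxy hβ) hM0

theorem continuousOn (hM : holderBnd T β M u) (hβ : 0 < β) : ContinuousOn u (Icc 0 T) := by
  intro x hx
  have hbound : Continuous fun y => M * |y - x| ^ β := by fun_prop (disch := positivity)
  have hlim : Filter.Tendsto (fun y => M * |y - x| ^ β) (nhdsWithin x (Icc 0 T)) (nhds 0) := by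
    simpa [Real.zero_rpow hβ.ne'] using (hbound.tendsto x).mono_left nhdsWithin_le_nhds
  refine tendsto_iff_norm_sub_tendsto_zero.2 (squeeze_zero' ?_ ?_ hlim)
  · exact Filter.Eventually.of_forall fun _ => norm_nonneg _
  · filter_upwards [self_mem_nhdsWithin] with y hy using hM y hy x hx

end holderBnd

theorem Pi2_sub_eq {τ : ℝ} (hτ : τ ≠ 0) (u : ℝ → ℝ) (j : ℕ) (s : ℝ) :
    Pi2 τ u j s - u s =
      (s - (j:ℝ) * τ) * (s - ((j:ℝ) + 1) * τ) / (2 * τ ^ 2) * (u (((j:ℝ) - 1) * τ) - u s)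
      - (s - ((j:ℝ) - 1) * τ) * (s - ((j:ℝ) + 1) * τ) / τ ^ 2 * (u ((j:ℝ) * τ) - u s)
      + (s - ((j:ℝ) - 1) * τ) * (s - (j:ℝ) * τ) / (2 * τ ^ 2) * (u (((j:ℝ) + 1) * τ) - u s) := by
  unfold Pi2
  field_simp
  ring

theorem abs_Pi2_sub_le {T β M τ : ℝ} {u : ℝ → ℝ} (hM : holderBnd T β M u) (hM0 : 0 ≤ M)
    (hβ : 0 ≤ β) (hτ : 0 < τ) {j : ℕ} (hj : 1 ≤ j) (hjT : ((j:ℝ) + 1) * τ ≤ T) {s : ℝ}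
    (hs : s ∈ Icc ((j:ℝ) * τ) (((j:ℝ) + 1) * τ)) :
    |Pi2 τ u j s - u s| ≤ (2 ^ (β - 1) + 2) * M * τ ^ (β - 1) * (((j:ℝ) + 1) * τ - s)
      + M * (((j:ℝ) + 1) * τ - s) ^ β := by
  obtain ⟨hs₁, hs₂⟩ := hs
  have hj' : (1:ℝ) ≤ j := by exact_mod_cast hj
  have hmem : ∀ x, ((j:ℝ) - 1) * τ ≤ x → x ≤ ((j:ℝ) + 1) * τ → x ∈ Icc 0 T := fun x h₁ h₂ =>
    ⟨(mul_nonneg (by linarith) hτ.le).trans h₁, h₂.trans hjT⟩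
  have hsT : s ∈ Icc 0 T := hmem s (by linarith) hs₂
  have e₀ : |u (((j:ℝ) - 1) * τ) - u s| ≤ M * (2 * τ) ^ β :=
    hM.le_of_abs_sub_le hM0 hβ (hmem _ le_rfl (by linarith)) hsT
      (abs_le.2 ⟨by linarith, by linarith⟩)
  have e₁ : |u ((j:ℝ) * τ) - u s| ≤ M * τ ^ β :=
    hM.le_of_abs_sub_le hM0 hβ (hmem _ (by linarith) (by linarith)) hsT
      (abs_le.2 ⟨by linarith, by linarith⟩)
  have e₂ : |u (((j:ℝ) + 1) * τ) - u s| ≤ M * (((j:ℝ) + 1) * τ - s) ^ β :=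
    hM.le_of_abs_sub_le hM0 hβ (hmem _ (by linarith) le_rfl) hsT
      (abs_of_nonneg (by linarith)).le
  have hτ₂ : 0 < 2 * τ ^ 2 := by positivity
  have w₀ : |(s - (j:ℝ) * τ) * (s - ((j:ℝ) + 1) * τ) / (2 * τ ^ 2)|
      ≤ (((j:ℝ) + 1) * τ - s) / (2 * τ) := by
    rw [abs_div, abs_of_pos hτ₂, abs_mul, abs_of_nonneg (by linarith), abs_of_nonpos (by linarith),
      div_le_div_iff₀ hτ₂ (by positivity)]
    nlinarith [mul_nonneg hτ.le (sq_nonneg (((j:ℝ) + 1) * τ - s))]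
  have w₁ : |(s - ((j:ℝ) - 1) * τ) * (s - ((j:ℝ) + 1) * τ) / τ ^ 2|
      ≤ 2 * (((j:ℝ) + 1) * τ - s) / τ := by
    rw [abs_div, abs_of_pos (pow_pos hτ 2), abs_mul, abs_of_nonneg (by linarith),
      abs_of_nonpos (by linarith), div_le_div_iff₀ (by positivity) hτ]
    nlinarith [mul_nonneg hτ.le (sq_nonneg (((j:ℝ) + 1) * τ - s))]
  have w₂ : |(s - ((j:ℝ) - 1) * τ) * (s - (j:ℝ) * τ) / (2 * τ ^ 2)| ≤ 1 := by
    rw [abs_div, abs_of_pos hτ₂, abs_mul, abs_of_nonneg (by linarith), abs_of_nonneg (by linarith),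
      div_le_one hτ₂]
    nlinarith
  have hτβ : τ ^ β = τ ^ (β - 1) * τ := by rw [← Real.rpow_add_one hτ.ne', sub_add_cancel]
  have h2β : (2:ℝ) ^ β = 2 ^ (β - 1) * 2 := by
    rw [← Real.rpow_add_one two_ne_zero, sub_add_cancel]
  rw [Pi2_sub_eq hτ.ne']
  calc _ ≤ _ := (abs_add_le _ _).trans (add_le_add_left (abs_sub _ _) _)
    _ ≤ (((j:ℝ) + 1) * τ - s) / (2 * τ) * (M * (2 * τ) ^ β)
        + 2 * (((j:ℝ) + 1) * τ - s) / τ * (M * τ ^ β)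
        + 1 * (M * (((j:ℝ) + 1) * τ - s) ^ β) := by simp only [abs_mul]; gcongr
    _ = _ := by
      rw [Real.mul_rpow zero_le_two hτ.le, hτβ, h2β]
      field_simp

theorem intervalIntegrable_sub_rpow (b τ : ℝ) {p : ℝ} (hp : -1 < p) :
    IntervalIntegrable (fun s => (b - s) ^ p) volume (b - τ) b := by
  simpa using
    ((intervalIntegral.intervalIntegrable_rpow' (a := 0) (b := τ) hp).comp_sub_left b).symm

theorem integral_sub_rpow (b τ : ℝ) {p : ℝ} (hp : -1 < p) :
    ∫ s in (b - τ)..b, (b - s) ^ p = τ ^ (p + 1) / (p + 1) := by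
  rw [intervalIntegral.integral_comp_sub_left (fun x => x ^ p) b, sub_self, sub_sub_cancel,
    integral_rpow (Or.inl hp), Real.zero_rpow (by linarith)]
  ring

theorem integral_abs_div_rpow_le {f : ℝ → ℝ} {b τ α β c K : ℝ} (hτ : 0 < τ) (hα : α < 1)
    (hαβ : α < β) (hf : ContinuousOn f (Ioo (b - τ) b))
    (hfb : ∀ s ∈ Ioo (b - τ) b, |f s| ≤ c * (b - s) + K * (b - s) ^ β) :
    ∫ s in (b - τ)..b, |f s| / (b - s) ^ (1 + α) ≤
      c * τ ^ (1 - α) / (1 - α) + K * τ ^ (β - α) / (β - α) := by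
  have hab : b - τ ≤ b := by linarith
  have hg₁ := intervalIntegrable_sub_rpow b τ (p := -α) (by linarith)
  have hg₂ := intervalIntegrable_sub_rpow b τ (p := β - α - 1) (by linarith)
  have hg := (hg₁.const_mul c).add (hg₂.const_mul K)
  have hle : ∀ s ∈ Ioo (b - τ) b, |f s| / (b - s) ^ (1 + α) ≤
      c * (b - s) ^ (-α) + K * (b - s) ^ (β - α - 1) := by
    intro s hs
    have hd : 0 < b - s := sub_pos.2 hs.2
    calc |f s| / (b - s) ^ (1 + α) ≤ (c * (b - s) + K * (b - s) ^ β) / (b - s) ^ (1 + α) := by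
          gcongr; exact hfb s hs
      _ = c * (b - s) ^ (-α) + K * (b - s) ^ (β - α - 1) := by
          rw [show -α = 1 - (1 + α) by ring, show β - α - 1 = β - (1 + α) by ring,
            Real.rpow_sub hd, Real.rpow_sub hd, Real.rpow_one]
          ring
  have hF : IntervalIntegrable (fun s => |f s| / (b - s) ^ (1 + α)) volume (b - τ) b := by
    rw [intervalIntegrable_iff_integrableOn_Ioo_of_le hab] at hg ⊢
    refine hg.mono' ?_ ((ae_restrict_mem measurableSet_Ioo).mono fun s hs => ?_)
    · refine (hf.abs.div (fun s hs => ?_) fun s hs => ?_).aestronglyMeasurable measurableSet_Ioo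
      · exact (continuousAt_const.sub continuousAt_id).rpow_const (.inl (sub_pos.2 hs.2).ne')
          |>.continuousWithinAt
      · exact (Real.rpow_pos_of_pos (sub_pos.2 hs.2) _).ne'
    · rw [Real.norm_of_nonneg (div_nonneg (abs_nonneg _) (Real.rpow_nonneg (sub_pos.2 hs.2).le _))]
      exact hle s hs
  calc _ ≤ ∫ s in (b - τ)..b, c * (b - s) ^ (-α) + K * (b - s) ^ (β - α - 1) :=
        intervalIntegral.integral_mono_on_of_le_Ioo hab hF hg hle
    _ = _ := by
      rw [intervalIntegral.integral_add (hg₁.const_mul c) (hg₂.const_mul K),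
        intervalIntegral.integral_const_mul, intervalIntegral.integral_const_mul,
        integral_sub_rpow b τ (by linarith), integral_sub_rpow b τ (by linarith)]
      ring_nf

theorem stmt5_general (T : ℝ) (hT : 0 < T) (α β : ℝ) (hα : 0 < α) (hαβ : α < β) (hβ1 : β ≤ 1)
    (u : ℝ → ℝ)
    (M : ℝ) (hM : holderBnd T β M u)
    (N : ℕ) (τ : ℝ) (hτ : τ = T / N)
    (n : ℕ) (hn : 2 ≤ n) (hnN : n ≤ N) :
    ∫ s in (((n:ℝ)-1)*τ)..((n:ℝ)*τ),
        |Pi2 τ u (n-1) s - u s| / ((n:ℝ)*τ - s) ^ (1+α) ≤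
      ((2 ^ (β - 1) + 2) / (1 - α) + 1 / (β - α)) * M * τ ^ (β - α) := by
  obtain ⟨j, rfl⟩ : ∃ j, n = j + 1 := ⟨n - 1, by omega⟩
  have hβ : 0 < β := hα.trans hαβ
  have hτ0 : 0 < τ := hτ ▸ div_pos hT (by norm_cast; omega)
  have hjT : ((j:ℝ) + 1) * τ ≤ T := by
    calc ((j:ℝ) + 1) * τ ≤ N * τ := by gcongr; exact_mod_cast hnN
      _ = T := by rw [hτ]; field_simp [show (N:ℝ) ≠ 0 by norm_cast; omega]
  have hnode : ((j:ℝ) + 1) * τ - τ = j * τ := by ring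
  have hcont : ContinuousOn (fun s => Pi2 τ u j s - u s)
      (Ioo (((j:ℝ) + 1) * τ - τ) ((j + 1) * τ)) :=
    (by unfold Pi2; fun_prop : Continuous (Pi2 τ u j)).continuousOn.sub <|
      (hM.continuousOn hβ).mono fun s hs => ⟨by nlinarith [hs.1], by linarith [hs.2]⟩
  push_cast [add_sub_cancel_right]
  rw [← hnode]
  calc _ ≤ (2 ^ (β - 1) + 2) * M * τ ^ (β - 1) * τ ^ (1 - α) / (1 - α)
        + M * τ ^ (β - α) / (β - α) :=
        integral_abs_div_rpow_le hτ0 (hαβ.trans_le hβ1) hαβ hcont fun s hs =>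
          abs_Pi2_sub_le hM (hM.nonneg hT) hβ.le hτ0 (by omega) hjT
            (hnode ▸ Ioo_subset_Icc_self hs)
    _ = _ := by
      rw [mul_assoc _ (τ ^ (β - 1)), ← Real.rpow_add hτ0]
      ring_nf

theorem stmt5 (T : ℝ) (hT : 0 < T) (α β : ℝ) (hα : 0 < α) (hαβ : α < β) (hβ1 : β ≤ 1)
    (u : ℝ → ℝ) (hu : ContinuousOn u (Set.Icc 0 T))
    (M : ℝ) (hM0 : 0 ≤ M) (hM : holderBnd T β M u)
    (N : ℕ) (hN : 0 < N) (τ : ℝ) (hτ : τ = T / N)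
    (n : ℕ) (hn : 2 ≤ n) (hnN : n ≤ N) :
    ∫ s in (((n:ℝ)-1)*τ)..((n:ℝ)*τ),
        |Pi2 τ u (n-1) s - u s| / ((n:ℝ)*τ - s) ^ (1+α) ≤
      ((2 ^ (β - 1) + 2) / (1 - α) + 1 / (β - α)) * M * τ ^ (β - α) :=
  stmt5_general T hT α β hα hαβ hβ1 u M hM N τ hτ n hn hnN
end

section
/- Let T > 0, 0 < α < 1, k ≥ 1 an integer, and 0 < β ≤ 1. Let u ∈ C^{1,β}([0,T]). There exists a constant C > 0 depending only on α, β, k and T (but not on τ or n) such that for every N ∈ ℕ with τ = T/N and every integer n with k ≤ n ≤ N, the L_k-type scheme satisfies |D_t^α u(t_n) − δ̂_τ^α u(t_n)| ≤ C [u']_{C^{0,β}[0,T]} τ^{1+β−α}. -/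
/-!
On each cell `[t_{j-1}, t_j]` the interpolant `H^n u` reproduces the tangent line of `u` at `t_j`,
so the Hölder bound on `u'` gives `|H^n u(s) - u(s)| ≤ C M τ^β (t_j - s) ≤ C M τ^β min(τ, t_n - s)`;
in particular `H^n u` agrees with `u` at `0` and at `t_n`. Hence the two Caputo derivatives at `t_n`
differ by `α/Γ(1-α) ∫_0^{t_n} (H^n u - u)(s) (t_n - s)^{-(α+1)} ds`, and integrating
`min(τ, t_n - s) (t_n - s)^{-(α+1)}` over `[0, t_n]` gives at most `τ^{1-α} (1/α + 1/(1-α))`.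
-/

open Set MeasureTheory

/-- The degree-`k` Lagrange interpolant `Π_{k,j} u` of `u` at the `k+1` nodes
`t_{j-k}, …, t_j` (with `t_i = iτ`):
`Π_{k,j}u(s) = Σ_{l=0}^{k} u(t_{j-l}) Π_{i≠l} (s - t_{j-i})/(t_{j-l} - t_{j-i})`. -/
noncomputable def Pik (τ : ℝ) (u : ℝ → ℝ) (k j : ℕ) (s : ℝ) : ℝ :=
  ∑ l ∈ Finset.range (k + 1), u (((j:ℝ) - (l:ℝ)) * τ) *
    ∏ i ∈ (Finset.range (k + 1)).erase l,
      (s - ((j:ℝ) - (i:ℝ)) * τ) / (((j:ℝ) - (l:ℝ)) * τ - ((j:ℝ) - (i:ℝ)) * τ)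

/-- The Caputo fractional derivative of order `α` in integrated form:
`D_t^α u(t) = (1/Γ(1-α)) (u(t)-u(0))/t^α + (α/Γ(1-α)) ∫_0^t (u(t)-u(s))/(t-s)^{α+1} ds`. -/
noncomputable def caputo (α : ℝ) (u : ℝ → ℝ) (t : ℝ) : ℝ :=
  (1 / Real.Gamma (1 - α)) * (u t - u 0) / t ^ α
    + (α / Real.Gamma (1 - α)) * ∫ s in (0:ℝ)..t, (u t - u s) / (t - s) ^ (α + 1)

/-- The piecewise interpolant `H^n u` of the `L_k`-type scheme: it equals `Π_{j,j} u` on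
`(t_{j-1}, t_j)` for `1 ≤ j ≤ k-1` and `Π_{k,j} u` on `(t_{j-1}, t_j)` for `k ≤ j ≤ n`.
(For `s ∈ (t_{j-1}, t_j)` one has `⌈s/τ⌉ = j`.) -/
noncomputable def Lkinterp (τ : ℝ) (u : ℝ → ℝ) (k : ℕ) (s : ℝ) : ℝ :=
  if ⌈s/τ⌉₊ < k then Pik τ u ⌈s/τ⌉₊ ⌈s/τ⌉₊ s else Pik τ u k ⌈s/τ⌉₊ s

/-- The `L_k`-type approximation `δ̂_τ^α u(t_n) = D_t^α (H^n u)(t_n)` of the Caputo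
derivative. -/
noncomputable def Lkapprox (α τ : ℝ) (u : ℝ → ℝ) (k n : ℕ) : ℝ :=
  caputo α (Lkinterp τ u k) ((n:ℝ)*τ)

section SingularKernel

theorem abs_div_rpow_le {x c y r : ℝ} (hy : 0 ≤ y) (h : |x| ≤ c) : |x / y ^ r| ≤ c * y ^ (-r) := by
  rw [abs_div, abs_of_nonneg (Real.rpow_nonneg hy _), Real.rpow_neg hy, div_eq_mul_inv]
  exact mul_le_mul_of_nonneg_right h (by positivity)

theorem abs_div_rpow_add_one_le {x c y r : ℝ} (hy : 0 ≤ y) (hr : r ≠ 0) (h : |x| ≤ c * y) :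
    |x / y ^ (r + 1)| ≤ c * y ^ (-r) := by
  refine (abs_div_rpow_le hy h).trans_eq ?_
  rw [mul_assoc, show -r = 1 + -(r + 1) by ring, Real.rpow_add' hy (by simpa using hr),
    Real.rpow_one]

variable {α τ t K : ℝ} {e : ℝ → ℝ}

theorem intervalIntegrable_sub_rpow_neg_succ (hτ : 0 < τ) (hτt : τ ≤ t) :
    IntervalIntegrable (fun s => (t - s) ^ (-(α + 1))) volume 0 (t - τ) := by
  have := (intervalIntegral.intervalIntegrable_rpow (r := -(α + 1))
    (Or.inr (notMem_uIcc_of_lt hτ (hτ.trans_le hτt)))).comp_sub_left t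
  simpa only [sub_self] using this.symm

theorem intervalIntegrable_sub_rpow_neg (hα : α < 1) :
    IntervalIntegrable (fun s => (t - s) ^ (-α)) volume (t - τ) t := by
  have := (intervalIntegral.intervalIntegrable_rpow' (r := -α) (a := τ) (b := 0)
    (by linarith)).comp_sub_left t
  simpa only [sub_zero] using this

theorem integral_sub_rpow_neg_succ_le (hα : 0 < α) (hτ : 0 < τ) (hτt : τ ≤ t) :
    ∫ s in (0:ℝ)..t - τ, (t - s) ^ (-(α + 1)) ≤ τ ^ (-α) / α := by
  rw [intervalIntegral.integral_comp_sub_left (fun x => x ^ (-(α + 1))), sub_sub_cancel,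
    sub_zero, integral_rpow (Or.inr ⟨by linarith, notMem_uIcc_of_lt hτ (by linarith)⟩),
    show -(α + 1) + 1 = -α by ring, div_neg, ← neg_div, neg_sub]
  have ht : 0 ≤ t ^ (-α) := Real.rpow_nonneg (by linarith) _
  gcongr
  linarith

theorem integral_sub_rpow_neg (hα : α < 1) :
    ∫ s in t - τ..t, (t - s) ^ (-α) = τ ^ (1 - α) / (1 - α) := by
  rw [intervalIntegral.integral_comp_sub_left (fun x => x ^ (-α)), sub_self, sub_sub_cancel,
    integral_rpow (Or.inl (by linarith)), Real.zero_rpow (by linarith), show -α + 1 = 1 - α by ring,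
    sub_zero]

theorem IntervalIntegrable.of_abs_le {f g : ℝ → ℝ} {a b : ℝ} (hab : a ≤ b)
    (hf : AEStronglyMeasurable f (volume.restrict (Ioc a b))) (hg : IntervalIntegrable g volume a b)
    (h : ∀ s ∈ Ioc a b, |f s| ≤ g s) : IntervalIntegrable f volume a b :=
  (intervalIntegrable_iff_integrableOn_Ioc_of_le hab).2 <|
    ((intervalIntegrable_iff_integrableOn_Ioc_of_le hab).1 hg).mono' hf
      (ae_restrict_of_forall_mem measurableSet_Ioc h)

theorem abs_integral_le_of_abs_le {f g : ℝ → ℝ} {a b : ℝ} (hab : a ≤ b)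
    (hg : IntervalIntegrable g volume a b) (h : ∀ s ∈ Ioc a b, |f s| ≤ g s) :
    |∫ s in a..b, f s| ≤ ∫ s in a..b, g s :=
  intervalIntegral.norm_integral_le_of_norm_le hab
    (Filter.Eventually.of_forall fun s hs => (Real.norm_eq_abs _).trans_le (h s hs)) hg

/-- Split at `t - τ`: away from `t` the kernel `(t - s)^{-(α+1)}` is integrable against `τ`,
near `t` the factor `t - s` lowers it to the integrable `(t - s)^{-α}`. -/
theorem intervalIntegrable_and_abs_integral_div_sub_rpow_le (hα0 : 0 < α) (hα1 : α < 1)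
    (hτ : 0 < τ) (hτt : τ ≤ t) (hK : 0 ≤ K)
    (he : AEStronglyMeasurable e (volume.restrict (Ioc 0 t)))
    (hbound : ∀ s ∈ Ioc 0 t, |e s| ≤ K * min τ (t - s)) :
    IntervalIntegrable (fun s => e s / (t - s) ^ (α + 1)) volume 0 t ∧
      |∫ s in (0:ℝ)..t, e s / (t - s) ^ (α + 1)| ≤ K * (1 / α + 1 / (1 - α)) * τ ^ (1 - α) := by
  set f : ℝ → ℝ := fun s => e s / (t - s) ^ (α + 1)
  have hf : AEStronglyMeasurable f (volume.restrict (Ioc 0 t)) :=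
    he.div₀ ((continuous_const.sub continuous_id).rpow_const
      fun _ => Or.inr (by linarith)).aestronglyMeasurable
  have hfar : ∀ s ∈ Ioc 0 (t - τ), |f s| ≤ K * τ * (t - s) ^ (-(α + 1)) := fun s hs =>
    abs_div_rpow_le (by linarith [hs.2]) <| (hbound s ⟨hs.1, by linarith [hs.2]⟩).trans <|
      mul_le_mul_of_nonneg_left (min_le_left _ _) hK
  have hnear : ∀ s ∈ Ioc (t - τ) t, |f s| ≤ K * (t - s) ^ (-α) := fun s hs =>
    abs_div_rpow_add_one_le (sub_nonneg.2 hs.2) hα0.ne' <|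
      (hbound s ⟨by linarith [hs.1], hs.2⟩).trans <|
        mul_le_mul_of_nonneg_left (min_le_right _ _) hK
  have hg_far := (intervalIntegrable_sub_rpow_neg_succ (α := α) hτ hτt).const_mul (K * τ)
  have hg_near := (intervalIntegrable_sub_rpow_neg (τ := τ) (t := t) hα1).const_mul K
  have h0 : 0 ≤ t - τ := by linarith
  have hle : t - τ ≤ t := by linarith
  have hint_far := IntervalIntegrable.of_abs_le h0 (hf.mono_measure (Measure.restrict_mono
    (Ioc_subset_Ioc_right hle) le_rfl)) hg_far hfar
  have hint_near := IntervalIntegrable.of_abs_le hle (hf.mono_measure (Measure.restrict_mono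
    (Ioc_subset_Ioc_left h0) le_rfl)) hg_near hnear
  refine ⟨hint_far.trans hint_near, ?_⟩
  rw [← intervalIntegral.integral_add_adjacent_intervals hint_far hint_near]
  calc |(∫ s in (0:ℝ)..t - τ, f s) + ∫ s in t - τ..t, f s|
      ≤ (∫ s in (0:ℝ)..t - τ, K * τ * (t - s) ^ (-(α + 1))) + ∫ s in t - τ..t, K * (t - s) ^ (-α) :=
        (abs_add_le _ _).trans (add_le_add (abs_integral_le_of_abs_le h0 hg_far hfar)
          (abs_integral_le_of_abs_le hle hg_near hnear))
    _ ≤ K * τ * (τ ^ (-α) / α) + K * (τ ^ (1 - α) / (1 - α)) := by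
        rw [intervalIntegral.integral_const_mul, intervalIntegral.integral_const_mul,
          integral_sub_rpow_neg hα1]
        gcongr
        exact integral_sub_rpow_neg_succ_le hα0 hτ hτt
    _ = K * (1 / α + 1 / (1 - α)) * τ ^ (1 - α) := by
        rw [show τ ^ (1 - α) = τ * τ ^ (-α) by
          rw [sub_eq_add_neg, Real.rpow_add hτ, Real.rpow_one]]
        ring

end SingularKernel

theorem caputo_sub_caputo {α t : ℝ} {u v : ℝ → ℝ} (ht : v t = u t) (h0 : v 0 = u 0)
    (hu : IntervalIntegrable (fun s => (u t - u s) / (t - s) ^ (α + 1)) volume 0 t)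
    (hvu : IntervalIntegrable (fun s => (v s - u s) / (t - s) ^ (α + 1)) volume 0 t) :
    caputo α u t - caputo α v t =
      α / Real.Gamma (1 - α) * ∫ s in (0:ℝ)..t, (v s - u s) / (t - s) ^ (α + 1) := by
  have hsplit : ∫ s in (0:ℝ)..t, (u t - v s) / (t - s) ^ (α + 1) =
      (∫ s in (0:ℝ)..t, (u t - u s) / (t - s) ^ (α + 1)) -
        ∫ s in (0:ℝ)..t, (v s - u s) / (t - s) ^ (α + 1) := by
    rw [← intervalIntegral.integral_sub hu hvu]
    congr 1 with s
    ring
  rw [caputo, caputo, ht, h0, hsplit]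
  ring

section Taylor

variable {T β M : ℝ} {u u' : ℝ → ℝ}

theorem abs_sub_sub_deriv_mul_le
    (hder : ∀ t ∈ Icc (0:ℝ) T, HasDerivWithinAt u (u' t) (Icc 0 T) t)
    (hHol : holderBnd T β M u') (hβ : 0 ≤ β) (hM : 0 ≤ M) {a c : ℝ}
    (ha : a ∈ Icc 0 T) (hc : c ∈ Icc 0 T) :
    |u a - u c - u' c * (a - c)| ≤ M * |a - c| ^ β * |a - c| := by
  have hsub : uIcc c a ⊆ Icc 0 T := ordConnected_Icc.uIcc_subset hc ha
  have hderiv : ∀ x ∈ uIcc c a,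
      HasDerivWithinAt (fun y => u y - u' c * y) (u' x - u' c) (uIcc c a) x := fun x hx =>
    ((hder x (hsub hx)).mono hsub).sub (by simpa using (hasDerivWithinAt_id x _).const_mul (u' c))
  have hbound : ∀ x ∈ uIcc c a, ‖u' x - u' c‖ ≤ M * |a - c| ^ β := fun x hx =>
    (hHol x (hsub hx) c hc).trans <|
      mul_le_mul_of_nonneg_left
        (Real.rpow_le_rpow (abs_nonneg _) (abs_sub_left_of_mem_uIcc hx) hβ) hM
  have := (convex_uIcc c a).norm_image_sub_le_of_norm_hasDerivWithin_le hderiv hbound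
    left_mem_uIcc right_mem_uIcc
  simp only [Real.norm_eq_abs] at this
  convert this using 2
  ring

theorem abs_sub_le_of_holderBnd
    (hder : ∀ t ∈ Icc (0:ℝ) T, HasDerivWithinAt u (u' t) (Icc 0 T) t)
    (hHol : holderBnd T β M u') (hβ : 0 ≤ β) (hM : 0 ≤ M) {s t : ℝ}
    (hs : 0 ≤ s) (hst : s ≤ t) (ht : t ≤ T) :
    |u t - u s| ≤ (|u' t| + M * t ^ β) * (t - s) := by
  have h := abs_sub_sub_deriv_mul_le hder hHol hβ hM ⟨hs, hst.trans ht⟩ ⟨hs.trans hst, ht⟩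
  rw [abs_sub_comm s t, abs_of_nonneg (sub_nonneg.2 hst)] at h
  have hpow : (t - s) ^ β ≤ t ^ β := Real.rpow_le_rpow (sub_nonneg.2 hst) (by linarith) hβ
  calc |u t - u s| = |u' t * (t - s) - (u s - u t - u' t * (s - t))| := by ring_nf
    _ ≤ |u' t * (t - s)| + |u s - u t - u' t * (s - t)| := abs_sub _ _
    _ ≤ |u' t| * (t - s) + M * (t - s) ^ β * (t - s) := by
        rw [abs_mul, abs_of_nonneg (sub_nonneg.2 hst)]
        linarith
    _ ≤ (|u' t| + M * t ^ β) * (t - s) := by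
        have := mul_le_mul_of_nonneg_left hpow hM
        nlinarith [sub_nonneg.2 hst]

theorem intervalIntegrable_caputo_integrand {α t : ℝ}
    (hder : ∀ t ∈ Icc (0:ℝ) T, HasDerivWithinAt u (u' t) (Icc 0 T) t)
    (hHol : holderBnd T β M u') (hβ : 0 ≤ β) (hM : 0 ≤ M) (hα0 : 0 < α) (hα1 : α < 1)
    (ht : 0 < t) (htT : t ≤ T) :
    IntervalIntegrable (fun s => (u t - u s) / (t - s) ^ (α + 1)) volume 0 t := by
  have hu : ContinuousOn u (Icc 0 T) := fun x hx => (hder x hx).continuousWithinAt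
  refine (intervalIntegrable_and_abs_integral_div_sub_rpow_le (K := |u' t| + M * t ^ β)
    hα0 hα1 ht le_rfl (by positivity) (aestronglyMeasurable_const.sub
      ((hu.mono (Ioc_subset_Icc_self.trans (Icc_subset_Icc_right htT))).aestronglyMeasurable
        measurableSet_Ioc)) fun s hs => ?_).1
  rw [min_eq_right (by linarith [hs.1])]
  exact abs_sub_le_of_holderBnd hder hHol hβ hM hs.1.le hs.2 htT

end Taylor

section Interpolation

variable {τ : ℝ} {m j l : ℕ} {s : ℝ}

noncomputable def lagrangeWeight (τ : ℝ) (m j l : ℕ) (s : ℝ) : ℝ :=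
  ∏ i ∈ (Finset.range (m + 1)).erase l,
    (s - ((j:ℝ) - (i:ℝ)) * τ) / (((j:ℝ) - (l:ℝ)) * τ - ((j:ℝ) - (i:ℝ)) * τ)

theorem Pik_eq_sum_lagrangeWeight (τ : ℝ) (u : ℝ → ℝ) (m j : ℕ) (s : ℝ) :
    Pik τ u m j s =
      ∑ l ∈ Finset.range (m + 1), u (((j:ℝ) - (l:ℝ)) * τ) * lagrangeWeight τ m j l s :=
  rfl

theorem abs_lagrangeFactor_le {i : ℕ} (hτ : 0 < τ) (hi : 1 ≤ i) (him : i ≤ m) (hil : i ≠ l)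
    (hs₁ : ((j:ℝ) - 1) * τ ≤ s) (hs₂ : s ≤ (j:ℝ) * τ) :
    |(s - ((j:ℝ) - (i:ℝ)) * τ) / (((j:ℝ) - (l:ℝ)) * τ - ((j:ℝ) - (i:ℝ)) * τ)| ≤ m := by
  have hi' : (1:ℝ) ≤ i := by exact_mod_cast hi
  have him' : (i:ℝ) ≤ m := by exact_mod_cast him
  have hden : τ ≤ |((j:ℝ) - l) * τ - (j - i) * τ| := by
    rw [show ((j:ℝ) - l) * τ - (j - i) * τ = ((i:ℤ) - (l:ℤ) : ℤ) * τ by push_cast; ring,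
      abs_mul, abs_of_pos hτ]
    have hne : (i:ℤ) - (l:ℤ) ≠ 0 := by omega
    have : (1:ℝ) ≤ |(((i:ℤ) - (l:ℤ) : ℤ) : ℝ)| := by exact_mod_cast Int.one_le_abs hne
    nlinarith
  rw [abs_div, div_le_iff₀ (hτ.trans_le hden), abs_of_nonneg (by nlinarith)]
  nlinarith

theorem abs_lagrangeWeight_le (hτ : 0 < τ) (hl : 1 ≤ l) (hlm : l ≤ m)
    (hs₁ : ((j:ℝ) - 1) * τ ≤ s) (hs₂ : s ≤ (j:ℝ) * τ) :
    |lagrangeWeight τ m j l s| ≤ (m:ℝ) ^ m * (((j:ℝ) * τ - s) / τ) := by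
  have h0 : 0 ∈ (Finset.range (m + 1)).erase l :=
    Finset.mem_erase.2 ⟨by omega, Finset.mem_range.2 (by omega)⟩
  have hl' : (1:ℝ) ≤ l := by exact_mod_cast hl
  have hfirst : |(s - ((j:ℝ) - ((0:ℕ):ℝ)) * τ) / (((j:ℝ) - (l:ℝ)) * τ - ((j:ℝ) - ((0:ℕ):ℝ)) * τ)|
      ≤ ((j:ℝ) * τ - s) / τ := by
    rw [Nat.cast_zero, sub_zero, show ((j:ℝ) - l) * τ - j * τ = -(l * τ) by ring, div_neg,
      abs_neg, abs_div, abs_of_nonpos (by linarith), abs_of_pos (by positivity), neg_sub]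
    exact div_le_div_of_nonneg_left (by linarith) hτ (by nlinarith)
  have hothers : ∀ i ∈ ((Finset.range (m + 1)).erase l).erase 0,
      |(s - ((j:ℝ) - (i:ℝ)) * τ) / (((j:ℝ) - (l:ℝ)) * τ - ((j:ℝ) - (i:ℝ)) * τ)| ≤ m := by
    intro i hi
    simp only [Finset.mem_erase, Finset.mem_range] at hi
    exact abs_lagrangeFactor_le hτ (by omega) (by omega) hi.2.1 hs₁ hs₂
  have hcard : (((Finset.range (m + 1)).erase l).erase 0).card ≤ m := by
    rw [Finset.card_erase_of_mem h0, Finset.card_erase_of_mem (Finset.mem_range.2 (by omega)),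
      Finset.card_range]
    omega
  rw [lagrangeWeight, ← Finset.mul_prod_erase _ _ h0, abs_mul, Finset.abs_prod, mul_comm]
  gcongr
  calc ∏ i ∈ ((Finset.range (m + 1)).erase l).erase 0,
        |(s - ((j:ℝ) - (i:ℝ)) * τ) / (((j:ℝ) - (l:ℝ)) * τ - ((j:ℝ) - (i:ℝ)) * τ)|
      ≤ ∏ _i ∈ ((Finset.range (m + 1)).erase l).erase 0, (m:ℝ) :=
        Finset.prod_le_prod (fun i _ => abs_nonneg _) hothers
    _ ≤ (m:ℝ) ^ m := by
        rw [Finset.prod_const]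
        exact pow_le_pow_right₀ (by exact_mod_cast hl.trans hlm) hcard

theorem abs_Pik_le {w : ℝ → ℝ} {A : ℝ} (hτ : 0 < τ) (hm : 1 ≤ m) (hw₀ : w ((j:ℝ) * τ) = 0)
    (hw : ∀ l, 1 ≤ l → l ≤ m → |w (((j:ℝ) - (l:ℝ)) * τ)| ≤ A)
    (hs₁ : ((j:ℝ) - 1) * τ ≤ s) (hs₂ : s ≤ (j:ℝ) * τ) :
    |Pik τ w m j s| ≤ ((m:ℝ) + 1) * (m:ℝ) ^ m * A * (((j:ℝ) * τ - s) / τ) := by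
  rw [Pik_eq_sum_lagrangeWeight]
  have hA : 0 ≤ A := (abs_nonneg _).trans (hw 1 le_rfl hm)
  have hterm : ∀ l ∈ Finset.range (m + 1), |w (((j:ℝ) - (l:ℝ)) * τ) * lagrangeWeight τ m j l s|
      ≤ (m:ℝ) ^ m * A * (((j:ℝ) * τ - s) / τ) := by
    intro l hl
    rcases Nat.eq_zero_or_pos l with rfl | hl1
    · rw [Nat.cast_zero, sub_zero, hw₀, zero_mul, abs_zero]
      have : 0 ≤ (j:ℝ) * τ - s := by linarith
      positivity
    · rw [abs_mul, mul_comm ((m:ℝ) ^ m), mul_assoc]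
      exact mul_le_mul (hw l hl1 (by simpa [Nat.lt_succ_iff] using hl))
        (abs_lagrangeWeight_le hτ hl1 (by simpa [Nat.lt_succ_iff] using hl) hs₁ hs₂)
        (abs_nonneg _) hA
  calc |∑ l ∈ Finset.range (m + 1), w (((j:ℝ) - (l:ℝ)) * τ) * lagrangeWeight τ m j l s|
      ≤ ∑ l ∈ Finset.range (m + 1), (m:ℝ) ^ m * A * (((j:ℝ) * τ - s) / τ) :=
        (Finset.abs_sum_le_sum_abs _ _).trans (Finset.sum_le_sum hterm)
    _ = ((m:ℝ) + 1) * (m:ℝ) ^ m * A * (((j:ℝ) * τ - s) / τ) := by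
        rw [Finset.sum_const, Finset.card_range, nsmul_eq_mul]
        push_cast
        ring

theorem Pik_sub (τ : ℝ) (u v : ℝ → ℝ) (m j : ℕ) (s : ℝ) :
    Pik τ (fun r => u r - v r) m j s = Pik τ u m j s - Pik τ v m j s := by
  simp only [Pik, sub_mul, Finset.sum_sub_distrib]

theorem Pik_eq_eval_interpolate (τ : ℝ) (u : ℝ → ℝ) (m j : ℕ) (s : ℝ) :
    Pik τ u m j s = (Lagrange.interpolate (Finset.range (m + 1))
      (fun i : ℕ => ((j:ℝ) - (i:ℝ)) * τ) (fun i => u (((j:ℝ) - (i:ℝ)) * τ))).eval s := by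
  rw [Lagrange.interpolate_apply, Polynomial.eval_finsetSum]
  refine Finset.sum_congr rfl fun l _ => ?_
  rw [Polynomial.eval_mul, Polynomial.eval_C, Lagrange.basis, Polynomial.eval_prod]
  congr 1
  refine Finset.prod_congr rfl fun i _ => ?_
  rw [Lagrange.basisDivisor, Polynomial.eval_mul, Polynomial.eval_C, Polynomial.eval_sub,
    Polynomial.eval_X, Polynomial.eval_C]
  ring

theorem Pik_affine (hτ : τ ≠ 0) (hm : 1 ≤ m) (a b : ℝ) :
    Pik τ (fun r => a + b * r) m j s = a + b * s := by
  have hinj : InjOn (fun i : ℕ => ((j:ℝ) - (i:ℝ)) * τ) (Finset.range (m + 1)) :=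
    fun x _ y _ h => by simpa using mul_right_cancel₀ hτ h
  have hdeg : (Polynomial.C b * Polynomial.X + Polynomial.C a).degree <
      ((Finset.range (m + 1)).card : WithBot ℕ) := by
    rw [Finset.card_range]
    refine (Polynomial.degree_linear_le).trans_lt ?_
    exact_mod_cast (by omega : 1 < m + 1)
  rw [Pik_eq_eval_interpolate,
    ← Lagrange.eq_interpolate_of_eval_eq _ hinj hdeg fun i _ => by simp [add_comm]]
  simp [add_comm]

end Interpolation

/-- `(k + 1) k^k (t_j - s)/τ` bounds the Lagrange weights of the nodes other than `t_j`, `k^{1+β}`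
comes from their distance `≤ kτ` to `t_j`, and `1` from the remainder at `s` itself. -/
noncomputable def interpConst (k : ℕ) (β : ℝ) : ℝ :=
  ((k:ℝ) + 1) * (k:ℝ) ^ (k + 1) * (k:ℝ) ^ β + 1

theorem interpConst_pos (k : ℕ) (β : ℝ) : 0 < interpConst k β := by
  unfold interpConst
  positivity

section LocalError

variable {T β M τ : ℝ} {u u' : ℝ → ℝ} {k m j : ℕ} {s : ℝ}

theorem abs_Pik_sub_le_of_abs_le {w : ℝ → ℝ} (hβ : 0 ≤ β) (hM : 0 ≤ M) (hτ : 0 < τ)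
    (hm : 1 ≤ m) (hmk : m ≤ k) (hmj : m ≤ j) (hjT : (j:ℝ) * τ ≤ T)
    (hw : ∀ r ∈ Icc 0 T, |w r| ≤ M * |r - j * τ| ^ β * |r - j * τ|)
    (hs₁ : ((j:ℝ) - 1) * τ ≤ s) (hs₂ : s ≤ (j:ℝ) * τ) :
    |Pik τ w m j s - w s| ≤ interpConst k β * M * τ ^ β * ((j:ℝ) * τ - s) := by
  have hmj' : (m:ℝ) ≤ j := by exact_mod_cast hmj
  have hm' : (1:ℝ) ≤ m := by exact_mod_cast hm
  have hmk' : (m:ℝ) ≤ k := by exact_mod_cast hmk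
  have hw₀ : w ((j:ℝ) * τ) = 0 := by
    simpa [sub_self] using hw _ ⟨by positivity, hjT⟩
  have hnode : ∀ l : ℕ, 1 ≤ l → l ≤ m →
      |w (((j:ℝ) - (l:ℝ)) * τ)| ≤ M * ((k:ℝ) * τ) ^ β * ((k:ℝ) * τ) := by
    intro l hl hlm
    have hlk : (l:ℝ) ≤ k := by exact_mod_cast hlm.trans hmk
    have hlj : (l:ℝ) ≤ j := by exact_mod_cast hlm.trans hmj
    have hdist : |((j:ℝ) - l) * τ - j * τ| = l * τ := by
      rw [show ((j:ℝ) - l) * τ - j * τ = -(l * τ) by ring, abs_neg, abs_of_nonneg (by positivity)]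
    refine (hw _ ⟨by nlinarith, by nlinarith⟩).trans ?_
    rw [hdist]
    gcongr
  have hws : |w s| ≤ M * τ ^ β * ((j:ℝ) * τ - s) := by
    have hdist : |s - j * τ| = j * τ - s := by rw [abs_sub_comm, abs_of_nonneg (by linarith)]
    refine (hw s ⟨by nlinarith, hs₂.trans hjT⟩).trans ?_
    rw [hdist]
    gcongr
    linarith
  have hpow : (m:ℝ) ^ m ≤ (k:ℝ) ^ k :=
    (pow_le_pow_left₀ (by positivity) hmk' m).trans (pow_le_pow_right₀ (hm'.trans hmk') hmk)
  have hcs : 0 ≤ (j:ℝ) * τ - s := by linarith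
  calc |Pik τ w m j s - w s| ≤ |Pik τ w m j s| + |w s| := abs_sub _ _
    _ ≤ ((m:ℝ) + 1) * (m:ℝ) ^ m * (M * ((k:ℝ) * τ) ^ β * ((k:ℝ) * τ)) * (((j:ℝ) * τ - s) / τ)
        + M * τ ^ β * ((j:ℝ) * τ - s) := add_le_add (abs_Pik_le hτ hm hw₀ hnode hs₁ hs₂) hws
    _ = (((m:ℝ) + 1) * (m:ℝ) ^ m * k) * ((k:ℝ) ^ β * M * τ ^ β * ((j:ℝ) * τ - s))
        + M * τ ^ β * ((j:ℝ) * τ - s) := by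
        rw [Real.mul_rpow (by positivity) hτ.le]
        field_simp
    _ ≤ (((k:ℝ) + 1) * (k:ℝ) ^ k * k) * ((k:ℝ) ^ β * M * τ ^ β * ((j:ℝ) * τ - s))
        + M * τ ^ β * ((j:ℝ) * τ - s) := by gcongr
    _ = interpConst k β * M * τ ^ β * ((j:ℝ) * τ - s) := by
        unfold interpConst
        ring

/-- Subtracting the tangent of `u` at `t_j`, which the interpolant reproduces, leaves a function
that vanishes to order `1 + β` at `t_j`. -/
theorem abs_Pik_sub_le
    (hder : ∀ t ∈ Icc (0:ℝ) T, HasDerivWithinAt u (u' t) (Icc 0 T) t)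
    (hHol : holderBnd T β M u') (hβ : 0 ≤ β) (hM : 0 ≤ M) (hτ : 0 < τ)
    (hm : 1 ≤ m) (hmk : m ≤ k) (hmj : m ≤ j) (hjT : (j:ℝ) * τ ≤ T)
    (hs₁ : ((j:ℝ) - 1) * τ ≤ s) (hs₂ : s ≤ (j:ℝ) * τ) :
    |Pik τ u m j s - u s| ≤ interpConst k β * M * τ ^ β * ((j:ℝ) * τ - s) := by
  set c : ℝ := (j:ℝ) * τ
  set w : ℝ → ℝ := fun r => u r - ((u c - u' c * c) + u' c * r)
  have hdiff : Pik τ u m j s - u s = Pik τ w m j s - w s := by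
    rw [Pik_sub, Pik_affine hτ.ne' hm]
    ring
  have hc : c ∈ Icc 0 T := ⟨by positivity, hjT⟩
  rw [hdiff]
  refine abs_Pik_sub_le_of_abs_le hβ hM hτ hm hmk hmj hjT (fun r hr => ?_) hs₁ hs₂
  convert abs_sub_sub_deriv_mul_le hder hHol hβ hM hr hc using 2
  ring

end LocalError

section Scheme

variable {T β M τ : ℝ} {u u' : ℝ → ℝ} {k : ℕ}

theorem Lkinterp_zero (τ : ℝ) (u : ℝ → ℝ) (hk : 1 ≤ k) : Lkinterp τ u k 0 = u 0 := by
  simp [Lkinterp, Pik, show 0 < k by omega]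

theorem continuous_Pik (τ : ℝ) (u : ℝ → ℝ) (m j : ℕ) : Continuous (Pik τ u m j) := by
  unfold Pik
  fun_prop

theorem measurable_Lkinterp (τ : ℝ) (u : ℝ → ℝ) (k : ℕ) : Measurable (Lkinterp τ u k) := by
  have hpieces : Measurable fun p : ℝ × ℕ =>
      if p.2 < k then Pik τ u p.2 p.2 p.1 else Pik τ u k p.2 p.1 :=
    measurable_from_prod_countable_left fun j => by
      dsimp only
      split_ifs
      exacts [(continuous_Pik τ u j j).measurable, (continuous_Pik τ u k j).measurable]
  exact hpieces.comp (measurable_id.prodMk (Nat.measurable_ceil.comp (measurable_id.div_const τ)))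

theorem abs_Lkinterp_sub_le
    (hder : ∀ t ∈ Icc (0:ℝ) T, HasDerivWithinAt u (u' t) (Icc 0 T) t)
    (hHol : holderBnd T β M u') (hβ : 0 ≤ β) (hM : 0 ≤ M) (hτ : 0 < τ) (hk : 1 ≤ k)
    {n : ℕ} (hnT : (n:ℝ) * τ ≤ T) {s : ℝ} (hs : s ∈ Ioc 0 ((n:ℝ) * τ)) :
    |Lkinterp τ u k s - u s| ≤ interpConst k β * M * τ ^ β * min τ ((n:ℝ) * τ - s) := by
  set j := ⌈s / τ⌉₊ with hj
  have hj1 : 1 ≤ j := Nat.ceil_pos.2 (div_pos hs.1 hτ)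
  have hjn : j ≤ n := Nat.ceil_le.2 ((div_le_iff₀ hτ).2 hs.2)
  have hs₂ : s ≤ (j:ℝ) * τ := (div_le_iff₀ hτ).1 (Nat.le_ceil _)
  have hs₁ : ((j:ℝ) - 1) * τ ≤ s := by
    have := Nat.ceil_lt_add_one (div_pos hs.1 hτ).le
    rw [← hj, ← sub_lt_iff_lt_add, lt_div_iff₀ hτ] at this
    exact this.le
  have hjn' : (j:ℝ) ≤ n := by exact_mod_cast hjn
  have hjT : (j:ℝ) * τ ≤ T := (mul_le_mul_of_nonneg_right hjn' hτ.le).trans hnT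
  have hloc : |Lkinterp τ u k s - u s| ≤ interpConst k β * M * τ ^ β * ((j:ℝ) * τ - s) := by
    unfold Lkinterp
    split_ifs with hjk
    · exact abs_Pik_sub_le hder hHol hβ hM hτ hj1 hjk.le le_rfl hjT hs₁ hs₂
    · exact abs_Pik_sub_le hder hHol hβ hM hτ hk le_rfl (not_lt.1 hjk) hjT hs₁ hs₂
  refine hloc.trans (mul_le_mul_of_nonneg_left (le_min (by linarith) (by nlinarith)) ?_)
  have := interpConst_pos k β
  positivity

theorem Lkinterp_grid
    (hder : ∀ t ∈ Icc (0:ℝ) T, HasDerivWithinAt u (u' t) (Icc 0 T) t)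
    (hHol : holderBnd T β M u') (hβ : 0 ≤ β) (hM : 0 ≤ M) (hτ : 0 < τ) (hk : 1 ≤ k)
    {n : ℕ} (hn : 1 ≤ n) (hnT : (n:ℝ) * τ ≤ T) :
    Lkinterp τ u k ((n:ℝ) * τ) = u ((n:ℝ) * τ) := by
  have hn' : (1:ℝ) ≤ n := by exact_mod_cast hn
  have := abs_Lkinterp_sub_le hder hHol hβ hM hτ hk hnT ⟨by positivity, le_rfl⟩
  rwa [sub_self, min_eq_right hτ.le, mul_zero, abs_nonpos_iff, sub_eq_zero] at this

theorem abs_caputo_sub_Lkapprox_le {α : ℝ}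
    (hder : ∀ t ∈ Icc (0:ℝ) T, HasDerivWithinAt u (u' t) (Icc 0 T) t)
    (hHol : holderBnd T β M u') (hβ : 0 ≤ β) (hM : 0 ≤ M) (hα0 : 0 < α) (hα1 : α < 1)
    (hτ : 0 < τ) (hk : 1 ≤ k) {n : ℕ} (hn : 1 ≤ n) (hnT : (n:ℝ) * τ ≤ T) :
    |caputo α u ((n:ℝ) * τ) - Lkapprox α τ u k n| ≤
      α / Real.Gamma (1 - α) * interpConst k β * (1 / α + 1 / (1 - α)) * M *
        τ ^ (1 + β - α) := by
  have hΓ : 0 < Real.Gamma (1 - α) := Real.Gamma_pos_of_pos (by linarith)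
  have hc := interpConst_pos k β
  have hτt : τ ≤ n * τ := le_mul_of_one_le_left hτ.le (by exact_mod_cast hn)
  set t := (n:ℝ) * τ
  have hu : ContinuousOn u (Icc 0 T) := fun x hx => (hder x hx).continuousWithinAt
  have hmeas : AEStronglyMeasurable (fun s => Lkinterp τ u k s - u s) (volume.restrict (Ioc 0 t)) :=
    (measurable_Lkinterp τ u k).aestronglyMeasurable.sub
      ((hu.mono (Ioc_subset_Icc_self.trans (Icc_subset_Icc_right hnT))).aestronglyMeasurable
        measurableSet_Ioc)
  obtain ⟨hint, hbound⟩ := intervalIntegrable_and_abs_integral_div_sub_rpow_le hα0 hα1 hτ hτt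
    (by positivity) hmeas fun s hs => abs_Lkinterp_sub_le hder hHol hβ hM hτ hk hnT hs
  rw [Lkapprox, caputo_sub_caputo (Lkinterp_grid hder hHol hβ hM hτ hk hn hnT)
    (Lkinterp_zero τ u hk) (intervalIntegrable_caputo_integrand hder hHol hβ hM hα0 hα1
      (hτ.trans_le hτt) hnT) hint, abs_mul, abs_of_pos (by positivity)]
  calc α / Real.Gamma (1 - α) * |∫ s in (0:ℝ)..t, (Lkinterp τ u k s - u s) / (t - s) ^ (α + 1)|
      ≤ α / Real.Gamma (1 - α) *
        (interpConst k β * M * τ ^ β * (1 / α + 1 / (1 - α)) * τ ^ (1 - α)) := by gcongr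
    _ = α / Real.Gamma (1 - α) * interpConst k β * (1 / α + 1 / (1 - α)) * M *
        τ ^ (1 + β - α) := by
        rw [show 1 + β - α = β + (1 - α) by ring, Real.rpow_add hτ]
        ring

end Scheme

theorem stmt15_general (T : ℝ) (hT : 0 < T) (α : ℝ) (hα0 : 0 < α) (hα1 : α < 1)
    (k : ℕ) (hk : 1 ≤ k) (β : ℝ) (hβ0 : 0 < β) :
    ∃ C > 0, ∀ u u' : ℝ → ℝ,
      (∀ t ∈ Set.Icc (0:ℝ) T, HasDerivWithinAt u (u' t) (Set.Icc 0 T) t) →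
      ContinuousOn u' (Set.Icc 0 T) →
      ∀ M : ℝ, 0 ≤ M → holderBnd T β M u' →
        ∀ N : ℕ, 0 < N → ∀ τ : ℝ, τ = T / N →
          ∀ n : ℕ, k ≤ n → n ≤ N →
            |caputo α u ((n:ℝ)*τ) - Lkapprox α τ u k n| ≤
              C * M * τ ^ (1 + β - α) := by
  have hΓ : 0 < Real.Gamma (1 - α) := Real.Gamma_pos_of_pos (by linarith)
  have hc := interpConst_pos k β
  have h1α : 0 < 1 - α := by linarith
  refine ⟨α / Real.Gamma (1 - α) * interpConst k β * (1 / α + 1 / (1 - α)), by positivity, ?_⟩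
  intro u u' hder _ M hM hHol N hN τ hτN n hkn hnN
  have hτ : 0 < τ := hτN ▸ by positivity
  refine abs_caputo_sub_Lkapprox_le hder hHol hβ0.le hM hα0 hα1 hτ hk (hk.trans hkn) ?_
  calc (n:ℝ) * τ ≤ N * τ := by gcongr
    _ = T := by rw [hτN]; field_simp

theorem stmt15 (T : ℝ) (hT : 0 < T) (α : ℝ) (hα0 : 0 < α) (hα1 : α < 1)
    (k : ℕ) (hk : 1 ≤ k) (β : ℝ) (hβ0 : 0 < β) (hβ1 : β ≤ 1) :
    ∃ C > 0, ∀ u u' : ℝ → ℝ,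
      (∀ t ∈ Set.Icc (0:ℝ) T, HasDerivWithinAt u (u' t) (Set.Icc 0 T) t) →
      ContinuousOn u' (Set.Icc 0 T) →
      ∀ M : ℝ, 0 ≤ M → holderBnd T β M u' →
        ∀ N : ℕ, 0 < N → ∀ τ : ℝ, τ = T / N →
          ∀ n : ℕ, k ≤ n → n ≤ N →
            |caputo α u ((n:ℝ)*τ) - Lkapprox α τ u k n| ≤
              C * M * τ ^ (1 + β - α) :=
  stmt15_general T hT α hα0 hα1 k hk β hβ0
end
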